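/- Let 𝓛, σ₀, ε ∈ (0,1], T, a, b be as in the a priori energy inequality, with ker 𝓛 = span{1} and spectral gap σ₀ > 0, and let E be a C¹ solution of ε ∂_t E + μ ∂_x E + (1/ε) 𝓛 E = R + G with ∫_{−1}^1 R(t,x,μ) dμ = 0 for all (t,x). Suppose there is a constant C > 0 such that ∫₀^T ‖R(s)‖²_{L²(dx dμ)} ds ≤ C² ε⁴, ∫₀^T ‖G(s)‖_{L²(dx dμ)} ds ≤ C ε³, ‖E(0)‖²_{L²(dx dμ)} ≤ C ε², ∫₀^T ∫₀^1 μ E(s,a,μ)² dμ ds ≤ C ε², and ∫₀^T ∫_{−1}^0 |μ| E(s,b,μ)² dμ ds ≤ C ε². Then there is a constant C′ depending only on C and σ₀ (not on ε) such that sup_{t ∈ [0,T]} ‖E(t)‖_{L²([a,b]×[−1,1])} ≤ C′ √ε. -/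

import Mathlib

/-!
Multiply the error equation by `E` and integrate over `[0,t] × [a,b] × [-1,1]`. The time
derivative contributes `ε/2 (‖E(t)‖² - ‖E(0)‖²)`; the transport term is a boundary flux of which
only the incoming parts (`μ > 0` at `x = a`, `μ < 0` at `x = b`) have the wrong sign; the
collision term is at least `σ₀/ε ‖E - ⟨E⟩‖²` by the spectral gap. Since `R` has velocity mean
zero, `∫ E R = ∫ (E - ⟨E⟩) R`, and Young's inequality absorbs it into half of the dissipation at
the price of `ε/σ₀ ‖R‖²`. What remains is `‖E(t)‖² ≤ B + (2/ε) ∫₀ᵗ ‖E‖ ‖G‖` with `B = O(ε)`.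
At a time where `‖E‖` is maximal this is a quadratic inequality `M² ≤ B + (2/ε) M ∫₀ᵀ ‖G‖`
for the maximum `M`, whence `M ≤ (2/ε) ∫₀ᵀ ‖G‖ + √B = O(√ε)`.
-/

open MeasureTheory Set Function

section Fubini

variable {X Y : Type*} [TopologicalSpace X] [MeasurableSpace X] [BorelSpace X] [T2Space X]
  [TopologicalSpace Y] [MeasurableSpace Y] [BorelSpace Y] [SecondCountableTopology Y] [T2Space Y]
  {μ : Measure X} {ν : Measure Y} [IsFiniteMeasureOnCompacts μ] [IsFiniteMeasureOnCompacts ν]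
  [SFinite μ] [SFinite ν] {s : Set X} {t : Set Y} {f : X → Y → ℝ}

theorem setIntegral_prod_of_continuous (hf : Continuous (uncurry f)) (hs : IsCompact s)
    (ht : IsCompact t) :
    ∫ z in s ×ˢ t, f z.1 z.2 ∂μ.prod ν = ∫ x in s, ∫ y in t, f x y ∂ν ∂μ :=
  setIntegral_prod (uncurry f) (hf.continuousOn.integrableOn_compact (hs.prod ht))

theorem integral_integral_swap_of_continuous (hf : Continuous (uncurry f)) (hs : IsCompact s)
    (ht : IsCompact t) :
    ∫ x in s, ∫ y in t, f x y ∂ν ∂μ = ∫ y in t, ∫ x in s, f x y ∂μ ∂ν := by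
  refine integral_integral_swap ?_
  rw [Measure.prod_restrict]
  exact hf.continuousOn.integrableOn_compact (hs.prod ht)

end Fubini

theorem Continuous.memLp_restrict_of_isCompact {X E : Type*} [TopologicalSpace X]
    [MeasurableSpace X] [OpensMeasurableSpace X] [T2Space X] [NormedAddCommGroup E]
    [SecondCountableTopologyEither X E] {μ : Measure X} [IsFiniteMeasureOnCompacts μ]
    {f : X → E} (hf : Continuous f) {K : Set X} (hK : IsCompact K) (p : ENNReal) :
    MemLp f p (μ.restrict K) := by
  have : IsFiniteMeasure (μ.restrict K) := isFiniteMeasure_restrict.2 hK.measure_lt_top.ne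
  obtain ⟨C, hC⟩ := hK.exists_bound_of_continuousOn hf.continuousOn
  exact .of_bound hf.aestronglyMeasurable C
    ((ae_restrict_iff' hK.measurableSet).2 (Filter.Eventually.of_forall hC))

theorem integral_mul_le_sqrt_mul_sqrt {α : Type*} [MeasurableSpace α] {μ : Measure α}
    {f g : α → ℝ} (hf : Integrable (fun x => f x ^ 2) μ) (hg : Integrable (fun x => g x ^ 2) μ)
    (hfg : Integrable (fun x => f x * g x) μ) :
    ∫ x, f x * g x ∂μ ≤ √(∫ x, f x ^ 2 ∂μ) * √(∫ x, g x ^ 2 ∂μ) := by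
  set A := ∫ x, f x ^ 2 ∂μ
  set B := ∫ x, f x * g x ∂μ
  set D := ∫ x, g x ^ 2 ∂μ
  have hquad : ∀ c : ℝ, 0 ≤ A * (c * c) + (-2 * B) * c + D := fun c => by
    have hexp : (fun x => (c * f x - g x) ^ 2) =
        fun x => c ^ 2 * f x ^ 2 - 2 * c * (f x * g x) + g x ^ 2 := by
      ext x; ring
    have hlin : Integrable (fun x => c ^ 2 * f x ^ 2 - 2 * c * (f x * g x)) μ :=
      (hf.const_mul _).sub (hfg.const_mul _)
    have h : ∫ x, (c * f x - g x) ^ 2 ∂μ = A * (c * c) + (-2 * B) * c + D := by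
      rw [hexp, integral_add hlin hg, integral_sub (hf.const_mul _) (hfg.const_mul _),
        integral_const_mul, integral_const_mul]
      ring
    exact h ▸ integral_nonneg fun x => sq_nonneg _
  have hdisc : B ^ 2 ≤ A * D := by
    have := discrim_le_zero hquad
    rw [discrim] at this
    linarith
  calc B ≤ |B| := le_abs_self B
    _ ≤ √(A * D) := Real.abs_le_sqrt hdisc
    _ = √A * √D := Real.sqrt_mul (integral_nonneg fun x => sq_nonneg _) D

theorem integral_Icc_mul_deriv {c d : ℝ} (hcd : c ≤ d) {f : ℝ → ℝ}
    (hf : ∀ x, DifferentiableAt ℝ f x) (hf' : Continuous (deriv f)) :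
    ∫ x in Icc c d, f x * deriv f x = (f d ^ 2 - f c ^ 2) / 2 := by
  rw [integral_Icc_eq_integral_Ioc, ← intervalIntegral.integral_of_le hcd]
  have hderiv : ∀ x ∈ uIcc c d, HasDerivAt (fun y => f y ^ 2 / 2) (f x * deriv f x) x :=
    fun x _ => (((hf x).hasDerivAt.fun_pow 2).div_const 2).congr_deriv (by push_cast; ring)
  have hcont : Continuous fun x => f x * deriv f x :=
    (continuous_iff_continuousAt.2 fun x => (hf x).continuousAt).mul hf'
  rw [intervalIntegral.integral_eq_sub_of_hasDerivAt hderiv (hcont.intervalIntegrable c d)]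
  ring

theorem setIntegral_Icc_split {f : ℝ → ℝ} (hf : Continuous f) {c m d : ℝ} (hcm : c ≤ m)
    (hmd : m ≤ d) : ∫ x in Icc c d, f x = (∫ x in Icc c m, f x) + ∫ x in Icc m d, f x := by
  simp only [integral_Icc_eq_integral_Ioc, ← intervalIntegral.integral_of_le, hcm, hmd,
    hcm.trans hmd]
  exact (intervalIntegral.integral_add_adjacent_intervals (hf.intervalIntegrable c m)
    (hf.intervalIntegrable m d)).symm

theorem setIntegral_Icc_mono_right {f : ℝ → ℝ} (hf : Continuous f) (hf0 : ∀ s, 0 ≤ f s)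
    {c t T : ℝ} (ht : t ≤ T) : ∫ s in Icc c t, f s ≤ ∫ s in Icc c T, f s :=
  setIntegral_mono_set hf.integrableOn_Icc (Filter.Eventually.of_forall hf0)
    (Icc_subset_Icc_right ht).eventuallyLE

section Sign

variable {f : ℝ → ℝ} {c d : ℝ}

theorem setIntegral_Icc_mul_le_of_nonneg (hf : Continuous f) (hf0 : ∀ x, 0 ≤ f x) (hc : c ≤ 0)
    (hd : 0 ≤ d) : ∫ μ in Icc c d, μ * f μ ≤ ∫ μ in Icc 0 d, μ * f μ := by
  rw [setIntegral_Icc_split (by fun_prop) hc hd]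
  have : ∫ μ in Icc c 0, μ * f μ ≤ 0 :=
    setIntegral_nonpos measurableSet_Icc fun μ hμ => mul_nonpos_of_nonpos_of_nonneg hμ.2 (hf0 μ)
  linarith

theorem neg_setIntegral_abs_mul_le (hf : Continuous f) (hf0 : ∀ x, 0 ≤ f x) (hc : c ≤ 0)
    (hd : 0 ≤ d) : -∫ μ in Icc c 0, |μ| * f μ ≤ ∫ μ in Icc c d, μ * f μ := by
  rw [setIntegral_Icc_split (by fun_prop) hc hd, ← integral_neg]
  have habs : ∫ μ in Icc c 0, -(|μ| * f μ) = ∫ μ in Icc c 0, μ * f μ :=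
    setIntegral_congr_fun measurableSet_Icc fun μ hμ => by rw [abs_of_nonpos hμ.2]; ring
  have : 0 ≤ ∫ μ in Icc 0 d, μ * f μ :=
    setIntegral_nonneg measurableSet_Icc fun μ hμ => mul_nonneg hμ.1 (hf0 μ)
  linarith

end Sign

theorem le_add_sqrt_of_sq_le {M A B : ℝ} (hB : 0 ≤ B) (h : M ^ 2 ≤ A + B * M) :
    M ≤ B + √A := by
  rcases le_or_gt 0 A with hA | hA
  · nlinarith [Real.sq_sqrt hA, Real.sqrt_nonneg A]
  · rw [Real.sqrt_eq_zero'.2 hA.le]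
    nlinarith

theorem sqrt_le_of_le_add_mul_integral {e j γ : ℝ → ℝ} {T B K : ℝ} (hT : 0 ≤ T) (hK : 0 ≤ K)
    (he : Continuous e) (hj : Continuous j) (hγ : Continuous γ) (he0 : ∀ s, 0 ≤ e s)
    (hγ0 : ∀ s, 0 ≤ γ s) (hjγ : ∀ s, j s ≤ √(e s) * γ s)
    (h : ∀ t ∈ Icc 0 T, e t ≤ B + K * ∫ s in Icc 0 t, j s) :
    ∀ t ∈ Icc 0 T, √(e t) ≤ K * (∫ s in Icc 0 T, γ s) + √B := by
  obtain ⟨s₀, hs₀, hmax⟩ :=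
    isCompact_Icc.exists_isMaxOn (nonempty_Icc.2 hT) he.sqrt.continuousOn
  set M := √(e s₀)
  have hj_le : ∀ t ∈ Icc 0 T, ∫ s in Icc 0 t, j s ≤ M * ∫ s in Icc 0 T, γ s := fun t ht =>
    calc ∫ s in Icc 0 t, j s ≤ ∫ s in Icc 0 t, M * γ s :=
          setIntegral_mono_on hj.integrableOn_Icc (hγ.const_mul M).integrableOn_Icc
            measurableSet_Icc fun s hs => (hjγ s).trans <|
              mul_le_mul_of_nonneg_right (hmax (Icc_subset_Icc_right ht.2 hs)) (hγ0 s)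
      _ ≤ M * ∫ s in Icc 0 T, γ s := by
          rw [integral_const_mul]
          exact mul_le_mul_of_nonneg_left (setIntegral_Icc_mono_right hγ hγ0 ht.2)
            (Real.sqrt_nonneg _)
  have hM : M ≤ K * (∫ s in Icc 0 T, γ s) + √B := by
    refine le_add_sqrt_of_sq_le
      (mul_nonneg hK (setIntegral_nonneg measurableSet_Icc fun s _ => hγ0 s)) ?_
    rw [Real.sq_sqrt (he0 s₀)]
    calc e s₀ ≤ B + K * ∫ s in Icc 0 s₀, j s := h s₀ hs₀
      _ ≤ B + K * (M * ∫ s in Icc 0 T, γ s) := by gcongr; exact hj_le s₀ hs₀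
      _ = B + K * (∫ s in Icc 0 T, γ s) * M := by ring
  exact fun t ht => (hmax ht).trans hM

section Iterated

variable {F G : ℝ → ℝ → ℝ → ℝ} {I J L : Set ℝ}

theorem continuous_of_continuous_uncurry₃
    (hF : Continuous fun p : ℝ × ℝ × ℝ => F p.1 p.2.1 p.2.2) (s x : ℝ) : Continuous (F s x) :=
  hF.comp (continuous_const.prodMk (continuous_const.prodMk continuous_id))

theorem continuous_setIntegral_inner (hF : Continuous fun p : ℝ × ℝ × ℝ => F p.1 p.2.1 p.2.2)
    (hL : IsCompact L) : Continuous fun q : ℝ × ℝ => ∫ μ in L, F q.1 q.2 μ :=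
  continuous_parametric_integral_of_continuous (f := fun (q : ℝ × ℝ) μ => F q.1 q.2 μ)
    (hF.comp (continuous_fst.fst.prodMk (continuous_fst.snd.prodMk continuous_snd))) hL

theorem continuous_setIntegral_setIntegral
    (hF : Continuous fun p : ℝ × ℝ × ℝ => F p.1 p.2.1 p.2.2) (hJ : IsCompact J)
    (hL : IsCompact L) : Continuous fun s => ∫ x in J, ∫ μ in L, F s x μ :=
  continuous_parametric_integral_of_continuous (f := fun s x => ∫ μ in L, F s x μ)
    (continuous_setIntegral_inner hF hL) hJ

theorem setIntegral_setIntegral_setIntegral_mono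
    (hF : Continuous fun p : ℝ × ℝ × ℝ => F p.1 p.2.1 p.2.2)
    (hG : Continuous fun p : ℝ × ℝ × ℝ => G p.1 p.2.1 p.2.2)
    (hI : IsCompact I) (hJ : IsCompact J) (hL : IsCompact L)
    (h : ∀ s ∈ I, ∀ x ∈ J, ∫ μ in L, F s x μ ≤ ∫ μ in L, G s x μ) :
    ∫ s in I, ∫ x in J, ∫ μ in L, F s x μ ≤ ∫ s in I, ∫ x in J, ∫ μ in L, G s x μ := by
  refine setIntegral_mono_on
    ((continuous_setIntegral_setIntegral hF hJ hL).continuousOn.integrableOn_compact hI)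
    ((continuous_setIntegral_setIntegral hG hJ hL).continuousOn.integrableOn_compact hI)
    hI.measurableSet fun s hs => setIntegral_mono_on ?_ ?_ hJ.measurableSet (h s hs)
  · exact ((continuous_setIntegral_inner hF hL).comp
      (Continuous.prodMk_right s)).continuousOn.integrableOn_compact hJ
  · exact ((continuous_setIntegral_inner hG hL).comp
      (Continuous.prodMk_right s)).continuousOn.integrableOn_compact hJ

theorem setIntegral_setIntegral_setIntegral_add
    (hF : Continuous fun p : ℝ × ℝ × ℝ => F p.1 p.2.1 p.2.2)
    (hG : Continuous fun p : ℝ × ℝ × ℝ => G p.1 p.2.1 p.2.2)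
    (hI : IsCompact I) (hJ : IsCompact J) (hL : IsCompact L) :
    ∫ s in I, ∫ x in J, ∫ μ in L, (F s x μ + G s x μ) =
      (∫ s in I, ∫ x in J, ∫ μ in L, F s x μ) + ∫ s in I, ∫ x in J, ∫ μ in L, G s x μ := by
  have hmid : ∀ {H : ℝ → ℝ → ℝ → ℝ}, (Continuous fun p : ℝ × ℝ × ℝ => H p.1 p.2.1 p.2.2) →
      ∀ s, Continuous fun x => ∫ μ in L, H s x μ := fun hH s =>
    (continuous_setIntegral_inner hH hL).comp (Continuous.prodMk_right s)
  rw [← integral_add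
    ((continuous_setIntegral_setIntegral hF hJ hL).continuousOn.integrableOn_compact hI)
    ((continuous_setIntegral_setIntegral hG hJ hL).continuousOn.integrableOn_compact hI)]
  congr 1; ext s
  rw [← integral_add ((hmid hF s).continuousOn.integrableOn_compact hJ)
    ((hmid hG s).continuousOn.integrableOn_compact hJ)]
  congr 1; ext x
  exact integral_add
    ((continuous_of_continuous_uncurry₃ hF s x).continuousOn.integrableOn_compact hL)
    ((continuous_of_continuous_uncurry₃ hG s x).continuousOn.integrableOn_compact hL)

end Iterated

theorem setIntegral_setIntegral_mul_le {u v : ℝ → ℝ → ℝ} {J L : Set ℝ}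
    (hu : Continuous (uncurry u)) (hv : Continuous (uncurry v)) (hJ : IsCompact J)
    (hL : IsCompact L) :
    ∫ x in J, ∫ μ in L, u x μ * v x μ ≤
      √(∫ x in J, ∫ μ in L, u x μ ^ 2) * √(∫ x in J, ∫ μ in L, v x μ ^ 2) := by
  have hint : ∀ {w : ℝ × ℝ → ℝ}, Continuous w →
      Integrable w ((volume.prod volume).restrict (J ×ˢ L)) := fun hw =>
    hw.continuousOn.integrableOn_compact (hJ.prod hL)
  rw [← setIntegral_prod_of_continuous (f := fun x μ => u x μ * v x μ) (hu.mul hv) hJ hL,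
    ← setIntegral_prod_of_continuous (f := fun x μ => u x μ ^ 2) (hu.fun_pow 2) hJ hL,
    ← setIntegral_prod_of_continuous (f := fun x μ => v x μ ^ 2) (hv.fun_pow 2) hJ hL]
  exact integral_mul_le_sqrt_mul_sqrt (hint (hu.fun_pow 2)) (hint (hv.fun_pow 2))
    (hint (hu.mul hv))

theorem setIntegral_transport_energy_le_of_gap {K : Set ℝ} (hK : IsCompact K) {ε σ m : ℝ}
    (hε : 0 < ε) (hσ : 0 < σ) {u ut ux r g L : ℝ → ℝ} (hu : Continuous u) (hut : Continuous ut)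
    (hux : Continuous ux) (hr : Continuous r) (hg : Continuous g)
    (heq : ∀ μ ∈ K, ε * ut μ + μ * ux μ + 1 / ε * L μ = r μ + g μ)
    (hr0 : ∫ μ in K, r μ = 0)
    (hgap : σ * ∫ μ in K, (u μ - m) ^ 2 ≤ ∫ μ in K, u μ * L μ) :
    ∫ μ in K, (ε * (u μ * ut μ) + μ * (u μ * ux μ)) ≤
      ∫ μ in K, (ε / (2 * σ) * r μ ^ 2 + u μ * g μ) := by
  have hint : ∀ {f : ℝ → ℝ}, Continuous f → Integrable f (volume.restrict K) := fun hf =>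
    hf.continuousOn.integrableOn_compact hK
  -- `L` need not be integrable a priori: on `K` the equation expresses it by continuous data
  have hL : ∫ μ in K, u μ * L μ = ∫ μ in K,
      (ε * (u μ * r μ) + ε * (u μ * g μ) - ε * (ε * (u μ * ut μ) + μ * (u μ * ux μ))) :=
    setIntegral_congr_fun hK.measurableSet fun μ hμ => by
      have h := heq μ hμ
      field_simp at h
      linear_combination u μ * h
  rw [hL, integral_sub (hint (by fun_prop)) (hint (by fun_prop)),
    integral_add (hint (by fun_prop)) (hint (by fun_prop))] at hgap
  -- Young's inequality for `(u - m) * r`; the remainder `m * r` integrates to zero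
  have hyoung : ∀ μ,
      u μ * r μ ≤ ε / (2 * σ) * r μ ^ 2 + σ / (2 * ε) * (u μ - m) ^ 2 + m * r μ := by
    intro μ
    have : 0 ≤ σ / (2 * ε) * (u μ - m - ε / σ * r μ) ^ 2 := by positivity
    field_simp at this ⊢
    nlinarith [this]
  have hmono := integral_mono (hint (by fun_prop)) (hint (by fun_prop)) hyoung
  rw [integral_add (hint (by fun_prop)) (hint (by fun_prop)),
    integral_add (hint (by fun_prop)) (hint (by fun_prop))] at hmono
  simp only [integral_const_mul, hr0, mul_zero, add_zero] at hgap hmono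
  have hW : 0 ≤ ∫ μ in K, (u μ - m) ^ 2 :=
    setIntegral_nonneg hK.measurableSet fun _ _ => sq_nonneg _
  have hεσ : ε * (σ / (2 * ε) * ∫ μ in K, (u μ - m) ^ 2) =
      σ / 2 * ∫ μ in K, (u μ - m) ^ 2 := by
    field_simp
  have hscaled := mul_le_mul_of_nonneg_left hmono hε.le
  rw [mul_add, hεσ] at hscaled
  have hsource : ∫ μ in K, (ε / (2 * σ) * r μ ^ 2 + u μ * g μ) =
      ε / (2 * σ) * (∫ μ in K, r μ ^ 2) + ∫ μ in K, u μ * g μ := by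
    rw [integral_add (hint (by fun_prop)) (hint (by fun_prop)), integral_const_mul]
  rw [hsource]
  refine le_of_mul_le_mul_left ?_ hε
  linarith [mul_nonneg hσ.le hW]

theorem neg_inflow_le_setIntegral_mul_deriv_space {u : ℝ → ℝ → ℝ}
    (hu : Continuous (uncurry u)) (hdx : ∀ x μ, DifferentiableAt ℝ (fun y => u y μ) x)
    (hux : Continuous fun q : ℝ × ℝ => deriv (fun y => u y q.2) q.1)
    {a b c d : ℝ} (hab : a ≤ b) (hc : c ≤ 0) (hd : 0 ≤ d) :
    -((∫ μ in Icc 0 d, μ * u a μ ^ 2) + ∫ μ in Icc c 0, |μ| * u b μ ^ 2) ≤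
      2 * ∫ x in Icc a b, ∫ μ in Icc c d, μ * (u x μ * deriv (fun y => u y μ) x) := by
  have hua : Continuous fun μ => u a μ ^ 2 := (hu.comp (Continuous.prodMk_right a)).pow 2
  have hub : Continuous fun μ => u b μ ^ 2 := (hu.comp (Continuous.prodMk_right b)).pow 2
  have ia : IntegrableOn (fun μ => μ * u a μ ^ 2) (Icc c d) :=
    (by fun_prop : Continuous _).integrableOn_Icc
  have ib : IntegrableOn (fun μ => μ * u b μ ^ 2) (Icc c d) :=
    (by fun_prop : Continuous _).integrableOn_Icc
  have hflux : ∫ x in Icc a b, ∫ μ in Icc c d, μ * (u x μ * deriv (fun y => u y μ) x) =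
      ((∫ μ in Icc c d, μ * u b μ ^ 2) - ∫ μ in Icc c d, μ * u a μ ^ 2) / 2 := by
    rw [integral_integral_swap_of_continuous
      (f := fun x μ => μ * (u x μ * deriv (fun y => u y μ) x))
      (continuous_snd.mul (hu.mul hux)) isCompact_Icc isCompact_Icc,
      ← integral_sub ib ia, ← integral_div]
    refine setIntegral_congr_fun measurableSet_Icc fun μ _ => ?_
    rw [integral_const_mul, integral_Icc_mul_deriv hab (fun x => hdx x μ)
      (hux.comp (continuous_id.prodMk continuous_const))]
    ring
  rw [hflux]
  linarith [setIntegral_Icc_mul_le_of_nonneg hua (fun _ => sq_nonneg _) hc hd,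
    neg_setIntegral_abs_mul_le hub (fun _ => sq_nonneg _) hc hd]

structure IsClassicalSolution (𝓛 : (ℝ → ℝ) → ℝ → ℝ) (ε T a b : ℝ) (E S : ℝ → ℝ → ℝ → ℝ) :
    Prop where
  continuous : Continuous fun p : ℝ × ℝ × ℝ => E p.1 p.2.1 p.2.2
  differentiableAt_time : ∀ t x μ : ℝ, DifferentiableAt ℝ (fun s => E s x μ) t
  differentiableAt_space : ∀ t x μ : ℝ, DifferentiableAt ℝ (fun y => E t y μ) x
  continuous_deriv_time : Continuous fun p : ℝ × ℝ × ℝ => deriv (fun s => E s p.2.1 p.2.2) p.1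
  continuous_deriv_space :
    Continuous fun p : ℝ × ℝ × ℝ => deriv (fun y => E p.1 y p.2.2) p.2.1
  eq : ∀ t ∈ Icc 0 T, ∀ x ∈ Icc a b, ∀ μ ∈ Icc (-1:ℝ) 1,
    ε * deriv (fun s => E s x μ) t + μ * deriv (fun y => E t y μ) x + (1 / ε) * 𝓛 (E t x) μ =
      S t x μ

namespace IsClassicalSolution

variable {𝓛 : (ℝ → ℝ) → ℝ → ℝ} {ε T a b : ℝ} {E S : ℝ → ℝ → ℝ → ℝ}

theorem continuous_slice (h : IsClassicalSolution 𝓛 ε T a b E S) (s : ℝ) :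
    Continuous (uncurry (E s)) :=
  h.continuous.comp (continuous_const.prodMk continuous_id)

theorem setIntegral_mul_deriv_time (h : IsClassicalSolution 𝓛 ε T a b E S) {J L : Set ℝ}
    {t₀ t₁ : ℝ} (ht : t₀ ≤ t₁) (hJ : IsCompact J) (hL : IsCompact L) :
    ∫ s in Icc t₀ t₁, ∫ x in J, ∫ μ in L, E s x μ * deriv (fun s' => E s' x μ) s =
      ((∫ x in J, ∫ μ in L, E t₁ x μ ^ 2) - ∫ x in J, ∫ μ in L, E t₀ x μ ^ 2) / 2 := by
  have hE' : Continuous fun p : ℝ × ℝ × ℝ =>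
      E p.1 p.2.1 p.2.2 * deriv (fun s' => E s' p.2.1 p.2.2) p.1 :=
    h.continuous.mul h.continuous_deriv_time
  have hsq : ∀ s, Continuous fun q : ℝ × ℝ => E s q.1 q.2 ^ 2 := fun s =>
    (h.continuous_slice s).fun_pow 2
  calc ∫ s in Icc t₀ t₁, ∫ x in J, ∫ μ in L, E s x μ * deriv (fun s' => E s' x μ) s
      = ∫ s in Icc t₀ t₁, ∫ q in J ×ˢ L, E s q.1 q.2 * deriv (fun s' => E s' q.1 q.2) s := by
        refine setIntegral_congr_fun measurableSet_Icc fun s _ => ?_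
        exact (setIntegral_prod_of_continuous
          (f := fun x μ => E s x μ * deriv (fun s' => E s' x μ) s)
          (hE'.comp (continuous_const.prodMk continuous_id)) hJ hL).symm
    _ = ∫ q in J ×ˢ L, ∫ s in Icc t₀ t₁, E s q.1 q.2 * deriv (fun s' => E s' q.1 q.2) s :=
        integral_integral_swap_of_continuous
          (f := fun s (q : ℝ × ℝ) => E s q.1 q.2 * deriv (fun s' => E s' q.1 q.2) s)
          hE' isCompact_Icc (hJ.prod hL)
    _ = ∫ q in J ×ˢ L, (E t₁ q.1 q.2 ^ 2 - E t₀ q.1 q.2 ^ 2) / 2 := by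
        congr 1; ext q
        exact integral_Icc_mul_deriv ht (fun s => h.differentiableAt_time s q.1 q.2)
          (h.continuous_deriv_time.comp (continuous_id.prodMk continuous_const))
    _ = ((∫ x in J, ∫ μ in L, E t₁ x μ ^ 2) - ∫ x in J, ∫ μ in L, E t₀ x μ ^ 2) / 2 := by
        rw [Measure.volume_eq_prod, integral_div,
          integral_sub ((hsq t₁).continuousOn.integrableOn_compact (hJ.prod hL))
            ((hsq t₀).continuousOn.integrableOn_compact (hJ.prod hL)),
          setIntegral_prod_of_continuous (f := fun x μ => E t₁ x μ ^ 2) (hsq t₁) hJ hL,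
          setIntegral_prod_of_continuous (f := fun x μ => E t₀ x μ ^ 2) (hsq t₀) hJ hL]

theorem neg_inflow_le_setIntegral_transport (h : IsClassicalSolution 𝓛 ε T a b E S)
    (hab : a ≤ b) {t : ℝ} (ht : t ∈ Icc 0 T) :
    -((∫ s in Icc 0 T, ∫ μ in Icc (0:ℝ) 1, μ * E s a μ ^ 2) +
        ∫ s in Icc 0 T, ∫ μ in Icc (-1:ℝ) 0, |μ| * E s b μ ^ 2) ≤
      2 * ∫ s in Icc 0 t, ∫ x in Icc a b, ∫ μ in Icc (-1:ℝ) 1,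
        μ * (E s x μ * deriv (fun y => E s y μ) x) := by
  have hboundary : ∀ y, Continuous fun q : ℝ × ℝ => E q.1 y q.2 := fun y =>
    h.continuous.comp (by fun_prop : Continuous fun q : ℝ × ℝ => (q.1, y, q.2))
  have hPa : Continuous fun s => ∫ μ in Icc (0:ℝ) 1, μ * E s a μ ^ 2 :=
    continuous_parametric_integral_of_continuous (f := fun s μ => μ * E s a μ ^ 2)
      (by have := hboundary a; fun_prop) isCompact_Icc
  have hPb : Continuous fun s => ∫ μ in Icc (-1:ℝ) 0, |μ| * E s b μ ^ 2 :=
    continuous_parametric_integral_of_continuous (f := fun s μ => |μ| * E s b μ ^ 2)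
      (by have := hboundary b; fun_prop) isCompact_Icc
  have hinflow : ∫ s in Icc 0 t, -((∫ μ in Icc (0:ℝ) 1, μ * E s a μ ^ 2) +
        ∫ μ in Icc (-1:ℝ) 0, |μ| * E s b μ ^ 2) ≤
      ∫ s in Icc 0 t, 2 * ∫ x in Icc a b, ∫ μ in Icc (-1:ℝ) 1,
        μ * (E s x μ * deriv (fun y => E s y μ) x) :=
    setIntegral_mono_on (hPa.add hPb).neg.integrableOn_Icc
      ((continuous_setIntegral_setIntegral
        (by have := h.continuous; have := h.continuous_deriv_space; fun_prop) isCompact_Icc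
        isCompact_Icc).const_mul 2).integrableOn_Icc measurableSet_Icc fun s _ =>
      neg_inflow_le_setIntegral_mul_deriv_space (h.continuous_slice s)
        (h.differentiableAt_space s)
        (h.continuous_deriv_space.comp (continuous_const.prodMk continuous_id)) hab
        (by norm_num) zero_le_one
  rw [integral_neg, integral_add hPa.integrableOn_Icc hPb.integrableOn_Icc, integral_const_mul]
    at hinflow
  have hPa_le := setIntegral_Icc_mono_right hPa (fun s => setIntegral_nonneg measurableSet_Icc
    fun μ hμ => mul_nonneg hμ.1 (sq_nonneg _)) (c := 0) ht.2
  have hPb_le := setIntegral_Icc_mono_right hPb (fun s => setIntegral_nonneg measurableSet_Icc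
    fun μ _ => mul_nonneg (abs_nonneg μ) (sq_nonneg _)) (c := 0) ht.2
  linarith

section Energy

variable {σ₀ : ℝ} {R G : ℝ → ℝ → ℝ → ℝ}

theorem iterated_transport_energy_le
    (h : IsClassicalSolution 𝓛 ε T a b E fun t x μ => R t x μ + G t x μ)
    (hσ₀ : 0 < σ₀) (hε : 0 < ε)
    (hR : Continuous fun p : ℝ × ℝ × ℝ => R p.1 p.2.1 p.2.2)
    (hG : Continuous fun p : ℝ × ℝ × ℝ => G p.1 p.2.1 p.2.2)
    (hgap : ∀ g : ℝ → ℝ, Continuous g →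
      σ₀ * (∫ μ in Icc (-1:ℝ) 1, (g μ - (1/2) * ∫ μ' in Icc (-1:ℝ) 1, g μ') ^ 2) ≤
        ∫ μ in Icc (-1:ℝ) 1, g μ * 𝓛 g μ)
    (hR0 : ∀ t ∈ Icc 0 T, ∀ x ∈ Icc a b, (∫ μ in Icc (-1:ℝ) 1, R t x μ) = 0)
    {t : ℝ} (ht : t ∈ Icc 0 T) :
    ε * (∫ s in Icc 0 t, ∫ x in Icc a b, ∫ μ in Icc (-1:ℝ) 1,
        E s x μ * deriv (fun s' => E s' x μ) s) +
      ∫ s in Icc 0 t, ∫ x in Icc a b, ∫ μ in Icc (-1:ℝ) 1,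
        μ * (E s x μ * deriv (fun y => E s y μ) x) ≤
    ε / (2 * σ₀) * (∫ s in Icc 0 t, ∫ x in Icc a b, ∫ μ in Icc (-1:ℝ) 1, R s x μ ^ 2) +
      ∫ s in Icc 0 t, ∫ x in Icc a b, ∫ μ in Icc (-1:ℝ) 1, E s x μ * G s x μ := by
  have hE := h.continuous
  have hEt := h.continuous_deriv_time
  have hEx := h.continuous_deriv_space
  have hsub : Icc 0 t ⊆ Icc 0 T := Icc_subset_Icc_right ht.2
  have hpointwise : ∀ s ∈ Icc 0 t, ∀ x ∈ Icc a b,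
      ∫ μ in Icc (-1:ℝ) 1, (ε * (E s x μ * deriv (fun s' => E s' x μ) s) +
        μ * (E s x μ * deriv (fun y => E s y μ) x)) ≤
      ∫ μ in Icc (-1:ℝ) 1, (ε / (2 * σ₀) * R s x μ ^ 2 + E s x μ * G s x μ) :=
    fun s hs x hx => setIntegral_transport_energy_le_of_gap isCompact_Icc hε hσ₀
      (continuous_of_continuous_uncurry₃ hE s x)
      (continuous_of_continuous_uncurry₃ (F := fun s x μ => deriv (fun s' => E s' x μ) s) hEt s x)
      (continuous_of_continuous_uncurry₃ (F := fun s x μ => deriv (fun y => E s y μ) x) hEx s x)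
      (continuous_of_continuous_uncurry₃ hR s x) (continuous_of_continuous_uncurry₃ hG s x)
      (h.eq s (hsub hs) x hx) (hR0 s (hsub hs) x hx)
      (hgap _ (continuous_of_continuous_uncurry₃ hE s x))
  have hintegrated := setIntegral_setIntegral_setIntegral_mono (by fun_prop) (by fun_prop)
    isCompact_Icc isCompact_Icc isCompact_Icc hpointwise
  rw [setIntegral_setIntegral_setIntegral_add (by fun_prop) (by fun_prop) isCompact_Icc
      isCompact_Icc isCompact_Icc, setIntegral_setIntegral_setIntegral_add (by fun_prop)
      (by fun_prop) isCompact_Icc isCompact_Icc isCompact_Icc] at hintegrated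
  simpa only [integral_const_mul] using hintegrated

theorem energy_le
    (h : IsClassicalSolution 𝓛 ε T a b E fun t x μ => R t x μ + G t x μ)
    (hσ₀ : 0 < σ₀) (hε : 0 < ε) (hab : a ≤ b)
    (hR : Continuous fun p : ℝ × ℝ × ℝ => R p.1 p.2.1 p.2.2)
    (hG : Continuous fun p : ℝ × ℝ × ℝ => G p.1 p.2.1 p.2.2)
    (hgap : ∀ g : ℝ → ℝ, Continuous g →
      σ₀ * (∫ μ in Icc (-1:ℝ) 1, (g μ - (1/2) * ∫ μ' in Icc (-1:ℝ) 1, g μ') ^ 2) ≤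
        ∫ μ in Icc (-1:ℝ) 1, g μ * 𝓛 g μ)
    (hR0 : ∀ t ∈ Icc 0 T, ∀ x ∈ Icc a b, (∫ μ in Icc (-1:ℝ) 1, R t x μ) = 0)
    {t : ℝ} (ht : t ∈ Icc 0 T) :
    ∫ x in Icc a b, ∫ μ in Icc (-1:ℝ) 1, E t x μ ^ 2 ≤
      ((∫ x in Icc a b, ∫ μ in Icc (-1:ℝ) 1, E 0 x μ ^ 2) +
        ((∫ s in Icc 0 T, ∫ μ in Icc (0:ℝ) 1, μ * E s a μ ^ 2) +
          ∫ s in Icc 0 T, ∫ μ in Icc (-1:ℝ) 0, |μ| * E s b μ ^ 2) / ε +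
        (∫ s in Icc 0 T, ∫ x in Icc a b, ∫ μ in Icc (-1:ℝ) 1, R s x μ ^ 2) / σ₀) +
      2 / ε * ∫ s in Icc 0 t, ∫ x in Icc a b, ∫ μ in Icc (-1:ℝ) 1, E s x μ * G s x μ := by
  have hbalance := h.iterated_transport_energy_le hσ₀ hε hR hG hgap hR0 ht
  rw [h.setIntegral_mul_deriv_time ht.1 isCompact_Icc isCompact_Icc] at hbalance
  have hinflow := h.neg_inflow_le_setIntegral_transport hab ht
  have hsource := setIntegral_Icc_mono_right
    (continuous_setIntegral_setIntegral (F := fun s x μ => R s x μ ^ 2) (J := Icc a b)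
      (L := Icc (-1) 1) (by fun_prop) isCompact_Icc isCompact_Icc)
    (fun s => integral_nonneg fun x => integral_nonneg fun μ => sq_nonneg (R s x μ)) (c := 0) ht.2
  have hsource' := mul_le_mul_of_nonneg_left hsource (by positivity : 0 ≤ ε / σ₀)
  rw [show ε / (2 * σ₀) = ε / σ₀ / 2 by ring] at hbalance
  refine le_of_mul_le_mul_left ?_ hε
  rw [mul_add, mul_add, mul_add, mul_div_cancel₀ _ hε.ne', ← mul_assoc, mul_div_cancel₀ _ hε.ne',
    ← mul_div_assoc, mul_div_right_comm]
  linarith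

end Energy

end IsClassicalSolution

theorem two_div_mul_add_sqrt_le_mul_sqrt {ε C σ₀ e₀ Pa Pb ρ Γ : ℝ} (hε : ε ∈ Ioc 0 1)
    (hC : 0 ≤ C) (hσ₀ : 0 < σ₀) (he₀ : e₀ ≤ C * ε ^ 2) (hPa : Pa ≤ C * ε ^ 2)
    (hPb : Pb ≤ C * ε ^ 2) (hρ : ρ ≤ C ^ 2 * ε ^ 4) (hΓ : Γ ≤ C * ε ^ 3) :
    2 / ε * Γ + √(e₀ + (Pa + Pb) / ε + ρ / σ₀) ≤ (2 * C + √(3 * C + C ^ 2 / σ₀)) * √ε := by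
  obtain ⟨hε0, hε1⟩ := hε
  have hε2 : ε ^ 2 ≤ ε := by nlinarith
  have hε4 : ε ^ 4 ≤ ε := by nlinarith [pow_le_one₀ hε0.le hε1 (n := 3)]
  have hdrift : 2 / ε * Γ ≤ 2 * C * √ε :=
    calc 2 / ε * Γ ≤ 2 / ε * (C * ε ^ 3) := by gcongr
      _ = 2 * C * ε ^ 2 := by field_simp
      _ ≤ 2 * C * √ε := by gcongr; exact hε2.trans (Real.le_sqrt_of_sq_le hε2)
  have hdata : e₀ + (Pa + Pb) / ε + ρ / σ₀ ≤ (3 * C + C ^ 2 / σ₀) * ε := by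
    have hflux : (Pa + Pb) / ε ≤ 2 * C * ε := by
      rw [div_le_iff₀ hε0]; nlinarith
    have hsrc : ρ / σ₀ ≤ C ^ 2 / σ₀ * ε := by
      rw [div_mul_eq_mul_div]; gcongr; nlinarith [sq_nonneg C]
    nlinarith
  calc 2 / ε * Γ + √(e₀ + (Pa + Pb) / ε + ρ / σ₀)
      ≤ 2 * C * √ε + √((3 * C + C ^ 2 / σ₀) * ε) := add_le_add hdrift (Real.sqrt_le_sqrt hdata)
    _ = (2 * C + √(3 * C + C ^ 2 / σ₀)) * √ε := by
      rw [Real.sqrt_mul (by positivity)]; ring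

/-- Grönwall-type conclusion of the energy estimate: under the `O(ε)`-scaled bounds on the
residuals, the initial data and the boundary terms, the error `E` is `O(√ε)` in
`L^∞(0,T; L²([a,b]×[-1,1]))`, with a constant depending only on `C` and `σ₀`. -/
theorem stmt8 (σ₀ C : ℝ) (hσ₀ : 0 < σ₀) (hC : 0 < C) :
    ∃ C' : ℝ, 0 < C' ∧
      ∀ (κ : ℝ → ℝ → ℝ),
        Measurable (Function.uncurry κ) →
        (∀ μ ∈ Icc (-1:ℝ) 1, ∀ μ' ∈ Icc (-1:ℝ) 1, 0 ≤ κ μ μ') →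
        (∀ μ ∈ Icc (-1:ℝ) 1, ∀ μ' ∈ Icc (-1:ℝ) 1, κ μ μ' = κ μ' μ) →
        (∀ μ ∈ Icc (-1:ℝ) 1, (∫ μ' in Icc (-1:ℝ) 1, κ μ μ') = 1) →
        -- `ker 𝓛 = span {1}`:
        (∀ g : ℝ → ℝ, MemLp g 2 (volume.restrict (Icc (-1:ℝ) 1)) →
          (∀ᵐ μ ∂(volume.restrict (Icc (-1:ℝ) 1)),
            g μ - (∫ μ' in Icc (-1:ℝ) 1, κ μ μ' * g μ') = 0) →
          ∃ c : ℝ, ∀ᵐ μ ∂(volume.restrict (Icc (-1:ℝ) 1)), g μ = c) →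
        -- spectral gap `σ₀`:
        (∀ g : ℝ → ℝ, MemLp g 2 (volume.restrict (Icc (-1:ℝ) 1)) →
          σ₀ * (∫ μ in Icc (-1:ℝ) 1, (g μ - (1/2) * ∫ μ' in Icc (-1:ℝ) 1, g μ') ^ 2) ≤
            ∫ μ in Icc (-1:ℝ) 1, g μ * (g μ - ∫ μ' in Icc (-1:ℝ) 1, κ μ μ' * g μ')) →
        ∀ (ε : ℝ), ε ∈ Ioc (0:ℝ) 1 →
        ∀ (T a b : ℝ), 0 < T → a < b →
        ∀ (E R G : ℝ → ℝ → ℝ → ℝ),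
          Continuous (fun p : ℝ × ℝ × ℝ => E p.1 p.2.1 p.2.2) →
          Continuous (fun p : ℝ × ℝ × ℝ => R p.1 p.2.1 p.2.2) →
          Continuous (fun p : ℝ × ℝ × ℝ => G p.1 p.2.1 p.2.2) →
          (∀ t x μ : ℝ, DifferentiableAt ℝ (fun s => E s x μ) t) →
          (∀ t x μ : ℝ, DifferentiableAt ℝ (fun y => E t y μ) x) →
          Continuous (fun p : ℝ × ℝ × ℝ => deriv (fun s => E s p.2.1 p.2.2) p.1) →
          Continuous (fun p : ℝ × ℝ × ℝ => deriv (fun y => E p.1 y p.2.2) p.2.1) →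
          -- the error equation:
          (∀ t ∈ Icc 0 T, ∀ x ∈ Icc a b, ∀ μ ∈ Icc (-1:ℝ) 1,
            ε * deriv (fun s => E s x μ) t + μ * deriv (fun y => E t y μ) x +
              (1 / ε) * (E t x μ - ∫ μ' in Icc (-1:ℝ) 1, κ μ μ' * E t x μ') =
                R t x μ + G t x μ) →
          (∀ t ∈ Icc 0 T, ∀ x ∈ Icc a b, (∫ μ in Icc (-1:ℝ) 1, R t x μ) = 0) →
          -- the scaled bounds on the data:
          (∫ s in Icc 0 T, ∫ x in Icc a b, ∫ μ in Icc (-1:ℝ) 1, (R s x μ) ^ 2) ≤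
            C ^ 2 * ε ^ 4 →
          (∫ s in Icc 0 T,
            Real.sqrt (∫ x in Icc a b, ∫ μ in Icc (-1:ℝ) 1, (G s x μ) ^ 2)) ≤ C * ε ^ 3 →
          (∫ x in Icc a b, ∫ μ in Icc (-1:ℝ) 1, (E 0 x μ) ^ 2) ≤ C * ε ^ 2 →
          (∫ s in Icc 0 T, ∫ μ in Icc (0:ℝ) 1, μ * (E s a μ) ^ 2) ≤ C * ε ^ 2 →
          (∫ s in Icc 0 T, ∫ μ in Icc (-1:ℝ) 0, |μ| * (E s b μ) ^ 2) ≤ C * ε ^ 2 →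
          -- conclusion: uniform `O(√ε)` bound
          ∀ t ∈ Icc 0 T,
            Real.sqrt (∫ x in Icc a b, ∫ μ in Icc (-1:ℝ) 1, (E t x μ) ^ 2) ≤
              C' * Real.sqrt ε := by
  refine ⟨2 * C + √(3 * C + C ^ 2 / σ₀), by positivity, ?_⟩
  intro κ _ _ _ _ _ hgap ε hε T a b hT hab E R G hE hR hG hdt hdx hEt hEx heq hR0 hRL2 hGL1 hE0
    hBa hBb t ht
  have h : IsClassicalSolution (fun g μ => g μ - ∫ μ' in Icc (-1:ℝ) 1, κ μ μ' * g μ') ε T a b E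
      fun t x μ => R t x μ + G t x μ := ⟨hE, hdt, hdx, hEt, hEx, heq⟩
  have hgronwall := sqrt_le_of_le_add_mul_integral hT.le (div_nonneg zero_le_two hε.1.le)
    (continuous_setIntegral_setIntegral (F := fun s x μ => E s x μ ^ 2) (by fun_prop)
      isCompact_Icc isCompact_Icc)
    (continuous_setIntegral_setIntegral (F := fun s x μ => E s x μ * G s x μ) (by fun_prop)
      isCompact_Icc isCompact_Icc)
    (continuous_setIntegral_setIntegral (F := fun s x μ => G s x μ ^ 2) (by fun_prop)
      isCompact_Icc isCompact_Icc).sqrt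
    (fun s => integral_nonneg fun x => integral_nonneg fun μ => sq_nonneg (E s x μ))
    (fun s => Real.sqrt_nonneg _)
    (fun s => setIntegral_setIntegral_mul_le (h.continuous_slice s)
      (hG.comp (continuous_const.prodMk continuous_id)) isCompact_Icc isCompact_Icc)
    (fun t ht => h.energy_le hσ₀ hε.1 hab.le hR hG
      (fun g hg => hgap g (hg.memLp_restrict_of_isCompact isCompact_Icc 2)) hR0 ht)
  exact (hgronwall t ht).trans (two_div_mul_add_sqrt_le_mul_sqrt hε hC.le hσ₀ hE0 hBa hBb hRL2 hGL1)
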